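/- Let 0 < Δ < 1, let S be a positive integer, and let τ_1, …, τ_S ∈ [0,1) satisfy min(|τ_j − τ_k|, 1 − |τ_j − τ_k|) > Δ for all j ≠ k. Let C: ℝ → ℝ be a continuous integrable function with ∑_{n∈ℤ} |C(n)| < ∞ whose Fourier transform 𝓕C(ξ) = ∫ C(t)·exp(−2πi·ξ·t) dt is continuous and vanishes for all |ξ| > Δ. Then for every c ∈ ℂ^S, ∑_{n∈ℤ} C(n) · |∑_{j=1}^S c_j · exp(−2πi·τ_j·n)|² = 𝓕C(0) · ∑_{j=1}^S |c_j|². -/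

import Mathlib

open MeasureTheory

/-!
Core identity in the proof of Proposition 1: for a continuous integrable real
window C, absolutely summable on ℤ, whose Fourier transform is continuous and
supported in [−Δ, Δ] (0 < Δ < 1), and delays in [0,1) whose pairwise wrap-around
separation exceeds Δ,
  ∑_{n∈ℤ} C(n) |∑_j c_j e^{−2πi τ_j n}|² = 𝓕C(0) · ∑_j |c_j|²:
the cross terms vanish and the diagonal terms are evaluated by Poisson summation.
-/
set_option maxHeartbeats 1000000 in
theorem window_weighted_exponential_sum_identity
    (Δ : ℝ) (hΔ : 0 < Δ) (hΔ1 : Δ < 1)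
    (S : ℕ) (hS : 0 < S)
    (τ : Fin S → ℝ) (hτ : ∀ j, τ j ∈ Set.Ico (0 : ℝ) 1)
    (hsep : ∀ j k, j ≠ k → Δ < min |τ j - τ k| (1 - |τ j - τ k|))
    (C : ℝ → ℝ) (hC_cont : Continuous C) (hC_int : Integrable C)
    (hC_sum : Summable fun n : ℤ => |C (n : ℝ)|)
    (hFT_cont : Continuous (FourierTransform.fourier fun t => (C t : ℂ)))
    (hFT_supp : ∀ ξ : ℝ, Δ < |ξ| → FourierTransform.fourier (fun t => (C t : ℂ)) ξ = 0) :
    ∀ c : Fin S → ℂ,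
      (∑' n : ℤ, (C (n : ℝ) : ℂ) *
          ((‖∑ j, c j * Complex.exp
              (-(2 * (Real.pi : ℂ) * Complex.I) * (τ j : ℂ) * (n : ℂ))‖ ^ 2 : ℝ) : ℂ))
        = FourierTransform.fourier (fun t => (C t : ℂ)) 0 * ((∑ j, ‖c j‖ ^ 2 : ℝ) : ℂ) := by
  intro c
  set Cc : ℝ → ℂ := fun t => (C t : ℂ) with hCc_def
  set F : ℝ → ℂ := FourierTransform.fourier Cc with hF_def
  -- basic facts
  have hCc_cont : Continuous Cc := Complex.continuous_ofReal.comp hC_cont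
  have hCc_int : Integrable Cc := hC_int.ofReal
  have hF_cpt : HasCompactSupport F := by
    apply HasCompactSupport.intro (isCompact_Icc (a := -Δ) (b := Δ))
    intro x hx
    refine hFT_supp x (lt_of_not_ge fun h => hx ?_)
    exact Set.mem_Icc.mpr (abs_le.mp h)
  have hF_int : Integrable F := hFT_cont.integrable_of_hasCompactSupport hF_cpt
  have hinv : ∀ v : ℝ, FourierTransform.fourier F v = Cc (-v) := by
    intro v
    have h := hCc_cont.fourierInv_fourier_eq hCc_int hF_int
    calc FourierTransform.fourier F v = FourierTransform.fourierInv F (-v) := by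
          rw [Real.fourierInv_eq_fourier_neg, neg_neg]
      _ = Cc (-v) := by rw [hF_def, h]
  -- the continuous map version of F
  set fC : C(ℝ, ℂ) := ⟨F, hFT_cont⟩ with hfC_def
  have h_norm : ∀ K : TopologicalSpace.Compacts ℝ,
      Summable fun n : ℤ => ‖(fC.comp (ContinuousMap.addRight (n : ℝ))).restrict K‖ := by
    intro K
    obtain ⟨r, hr⟩ := K.isCompact.isBounded.subset_closedBall 0
    refine summable_of_ne_finset_zero (s := Finset.Icc (-(⌈r⌉ + 2)) (⌈r⌉ + 2)) ?_
    intro n hn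
    have hn' : (⌈r⌉ + 2 : ℤ) < |n| := by
      simp only [Finset.mem_Icc, not_and_or, not_le] at hn
      rcases hn with h | h
      · calc (⌈r⌉ + 2 : ℤ) < -n := by omega
          _ ≤ |n| := neg_le_abs n
      · exact lt_of_lt_of_le h (le_abs_self n)
    have : (fC.comp (ContinuousMap.addRight (n : ℝ))).restrict K = 0 := by
      ext ⟨x, hx⟩
      have hxr : |x| ≤ r := by simpa [Real.norm_eq_abs] using hr hx
      have hceil : r ≤ (⌈r⌉ : ℝ) := Int.le_ceil r
      have hnn : (⌈r⌉ + 2 : ℝ) + 1 ≤ |(n : ℝ)| := by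
        have : ((⌈r⌉ + 2 : ℤ) : ℝ) + 1 ≤ ((|n| : ℤ) : ℝ) := by exact_mod_cast hn'
        simpa [Int.cast_abs] using this
      have habs : Δ < |x + (n : ℝ)| := by
        have h1 : |(n : ℝ)| - |x| ≤ |x + (n : ℝ)| := by
          have := abs_sub_abs_le_abs_sub (n : ℝ) (-x)
          simpa [sub_neg_eq_add, add_comm] using this
        have : (1 : ℝ) ≤ |x + (n : ℝ)| := by nlinarith
        linarith
      simp only [ContinuousMap.restrict_apply, ContinuousMap.comp_apply,
        ContinuousMap.coe_addRight, ContinuousMap.zero_apply]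
      exact hFT_supp _ habs
    rw [this, norm_zero]
  have hC_sum' : Summable fun n : ℤ => Cc (n : ℝ) := by
    apply Summable.of_norm
    simpa [hCc_def, Complex.norm_real, Real.norm_eq_abs] using hC_sum
  have h_sum : Summable fun n : ℤ => FourierTransform.fourier (⇑fC) (n : ℝ) := by
    have he : (fun n : ℤ => FourierTransform.fourier (⇑fC) (n : ℝ))
        = fun n : ℤ => Cc (-(n : ℝ)) := by
      funext n; exact hinv (n : ℝ)
    rw [he]
    have := (Equiv.neg ℤ).summable_iff.mpr hC_sum'
    simpa [Function.comp_def] using this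
  -- Poisson summation specialized
  have poisson : ∀ x : ℝ,
      ∑' n : ℤ, (C (n : ℝ) : ℂ) *
        Complex.exp (-(2 * (Real.pi : ℂ) * Complex.I) * (x : ℂ) * (n : ℂ))
      = ∑' m : ℤ, F (x + (m : ℝ)) := by
    intro x
    have h1 := Real.tsum_eq_tsum_fourier (f := fC) h_norm h_sum x
    set f₀ : ℤ → ℂ := fun n => Cc (-(n : ℝ)) *
      Complex.exp (2 * (Real.pi : ℂ) * Complex.I * (n : ℂ) * (x : ℂ)) with hf₀
    have h2 : (fun n : ℤ => FourierTransform.fourier (⇑fC) (n : ℝ) *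
        fourier n (x : UnitAddCircle)) = f₀ := by
      funext n
      have : FourierTransform.fourier (⇑fC) (n : ℝ) = Cc (-(n : ℝ)) := hinv (n : ℝ)
      rw [this, fourier_coe_apply]
      simp only [hf₀]
      norm_num
    calc ∑' n : ℤ, (C (n : ℝ) : ℂ) *
          Complex.exp (-(2 * (Real.pi : ℂ) * Complex.I) * (x : ℂ) * (n : ℂ))
        = ∑' n : ℤ, f₀ (-n) := by
          refine tsum_congr fun n => ?_
          simp only [hf₀, Int.cast_neg, neg_neg, hCc_def]
          congr 1
          · push_cast; ring_nf
      _ = ∑' n : ℤ, f₀ n := (Equiv.neg ℤ).tsum_eq f₀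
      _ = ∑' m : ℤ, F (x + (m : ℝ)) := by
          rw [← h2, ← h1]
          exact tsum_congr fun n => rfl
  -- evaluation of the periodized Fourier transform
  have diag : ∑' n : ℤ, (C (n : ℝ) : ℂ) *
      Complex.exp (-(2 * (Real.pi : ℂ) * Complex.I) * ((0 : ℝ) : ℂ) * (n : ℂ))
      = F 0 := by
    rw [poisson 0]
    have h0 : ∀ m : ℤ, m ≠ 0 → F (0 + (m : ℝ)) = 0 := by
      intro m hm
      refine hFT_supp _ ?_
      have : (1 : ℝ) ≤ |(m : ℝ)| := by
        have h' : (0 : ℤ) < |m| := abs_pos.mpr hm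
        have : (1 : ℤ) ≤ |m| := h'
        exact_mod_cast this
      rw [zero_add]; linarith
    rw [tsum_eq_single 0 h0]
    norm_num
  have cross : ∀ x : ℝ, |x| < 1 → Δ < |x| → Δ < 1 - |x| →
      ∑' n : ℤ, (C (n : ℝ) : ℂ) *
        Complex.exp (-(2 * (Real.pi : ℂ) * Complex.I) * (x : ℂ) * (n : ℂ)) = 0 := by
    intro x hx1 hxΔ hxΔ'
    rw [poisson x]
    have : ∀ m : ℤ, F (x + (m : ℝ)) = 0 := by
      intro m
      refine hFT_supp _ ?_
      rcases eq_or_ne m 0 with rfl | hm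
      · simpa using hxΔ
      · have h1 : (1 : ℝ) ≤ |(m : ℝ)| := by
          have h' : (0 : ℤ) < |m| := abs_pos.mpr hm
          have : (1 : ℤ) ≤ |m| := h'
          exact_mod_cast this
        have h2 : |(m : ℝ)| - |x| ≤ |x + (m : ℝ)| := by
          have := abs_sub_abs_le_abs_sub (m : ℝ) (-x)
          simpa [sub_neg_eq_add, add_comm] using this
        linarith
    simp [this]
  -- summability of each summand family
  have hsum_exp : ∀ x : ℝ, Summable fun n : ℤ => (C (n : ℝ) : ℂ) *
      Complex.exp (-(2 * (Real.pi : ℂ) * Complex.I) * (x : ℂ) * (n : ℂ)) := by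
    intro x
    apply Summable.of_norm
    have : ∀ n : ℤ, ‖(C (n : ℝ) : ℂ) *
        Complex.exp (-(2 * (Real.pi : ℂ) * Complex.I) * (x : ℂ) * (n : ℂ))‖
        = |C (n : ℝ)| := by
      intro n
      rw [norm_mul]
      have harg : (-(2 * (Real.pi : ℂ) * Complex.I) * (x : ℂ) * (n : ℂ))
          = ((-(2 * Real.pi * x * n) : ℝ) : ℂ) * Complex.I := by push_cast; ring
      rw [harg, Complex.norm_exp_ofReal_mul_I, mul_one, Complex.norm_real,
        Real.norm_eq_abs]
    exact (summable_congr this).mpr hC_sum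
  -- expansion of the squared modulus
  have expand : ∀ n : ℤ, (C (n : ℝ) : ℂ) *
      ((‖∑ j, c j * Complex.exp
          (-(2 * (Real.pi : ℂ) * Complex.I) * (τ j : ℂ) * (n : ℂ))‖ ^ 2 : ℝ) : ℂ)
      = ∑ j, ∑ k, (c j * (starRingEnd ℂ) (c k)) *
          ((C (n : ℝ) : ℂ) * Complex.exp
            (-(2 * (Real.pi : ℂ) * Complex.I) * ((τ j - τ k : ℝ) : ℂ) * (n : ℂ))) := by
    intro n
    set z := ∑ j, c j * Complex.exp
      (-(2 * (Real.pi : ℂ) * Complex.I) * (τ j : ℂ) * (n : ℂ)) with hz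
    have hnorm : ((‖z‖ ^ 2 : ℝ) : ℂ) = z * (starRingEnd ℂ) z := by
      rw [Complex.mul_conj]
      norm_cast
      rw [Complex.normSq_eq_norm_sq]
    rw [hnorm, hz, map_sum, Finset.sum_mul_sum]
    rw [Finset.mul_sum]
    refine Finset.sum_congr rfl fun j _ => ?_
    rw [Finset.mul_sum]
    refine Finset.sum_congr rfl fun k _ => ?_
    have hconj : (starRingEnd ℂ) (Complex.exp
        (-(2 * (Real.pi : ℂ) * Complex.I) * (τ k : ℂ) * (n : ℂ)))
        = Complex.exp ((2 * (Real.pi : ℂ) * Complex.I) * (τ k : ℂ) * (n : ℂ)) := by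
      rw [← Complex.exp_conj]
      congr 1
      simp only [map_mul, map_neg, Complex.conj_I, Complex.conj_ofReal, map_ofNat,
        map_intCast]
      ring
    have hmul : Complex.exp (-(2 * (Real.pi : ℂ) * Complex.I) * (τ j : ℂ) * (n : ℂ)) *
        Complex.exp ((2 * (Real.pi : ℂ) * Complex.I) * (τ k : ℂ) * (n : ℂ))
        = Complex.exp
            (-(2 * (Real.pi : ℂ) * Complex.I) * ((τ j - τ k : ℝ) : ℂ) * (n : ℂ)) := by
      rw [← Complex.exp_add]
      congr 1
      push_cast
      ring
    rw [map_mul, hconj]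
    calc (C (n : ℝ) : ℂ) *
          (c j * Complex.exp (-(2 * (Real.pi : ℂ) * Complex.I) * (τ j : ℂ) * (n : ℂ)) *
            ((starRingEnd ℂ) (c k) *
              Complex.exp ((2 * (Real.pi : ℂ) * Complex.I) * (τ k : ℂ) * (n : ℂ))))
        = (c j * (starRingEnd ℂ) (c k)) * ((C (n : ℝ) : ℂ) *
            (Complex.exp (-(2 * (Real.pi : ℂ) * Complex.I) * (τ j : ℂ) * (n : ℂ)) *
              Complex.exp ((2 * (Real.pi : ℂ) * Complex.I) * (τ k : ℂ) * (n : ℂ)))) := by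
          ring
      _ = _ := by rw [hmul]
  -- main computation
  calc (∑' n : ℤ, (C (n : ℝ) : ℂ) *
          ((‖∑ j, c j * Complex.exp
              (-(2 * (Real.pi : ℂ) * Complex.I) * (τ j : ℂ) * (n : ℂ))‖ ^ 2 : ℝ) : ℂ))
      = ∑' n : ℤ, ∑ j, ∑ k, (c j * (starRingEnd ℂ) (c k)) *
          ((C (n : ℝ) : ℂ) * Complex.exp
            (-(2 * (Real.pi : ℂ) * Complex.I) * ((τ j - τ k : ℝ) : ℂ) * (n : ℂ))) :=
        tsum_congr expand
    _ = ∑ j, ∑ k, ∑' n : ℤ, (c j * (starRingEnd ℂ) (c k)) *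
          ((C (n : ℝ) : ℂ) * Complex.exp
            (-(2 * (Real.pi : ℂ) * Complex.I) * ((τ j - τ k : ℝ) : ℂ) * (n : ℂ))) := by
        rw [Summable.tsum_finsetSum fun j _ => summable_sum fun k _ => ((hsum_exp _).mul_left _)]
        exact Finset.sum_congr rfl fun j _ =>
          Summable.tsum_finsetSum fun k _ => ((hsum_exp _).mul_left _)
    _ = ∑ j, ∑ k, (c j * (starRingEnd ℂ) (c k)) *
          ∑' n : ℤ, (C (n : ℝ) : ℂ) * Complex.exp
            (-(2 * (Real.pi : ℂ) * Complex.I) * ((τ j - τ k : ℝ) : ℂ) * (n : ℂ)) :=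
        Finset.sum_congr rfl fun j _ => Finset.sum_congr rfl fun k _ => tsum_mul_left
    _ = ∑ j, (c j * (starRingEnd ℂ) (c j)) * F 0 := by
        refine Finset.sum_congr rfl fun j _ => ?_
        rw [Finset.sum_eq_single j]
        · rw [sub_self, diag]
        · intro k _ hkj
          have hsep' := hsep j k (Ne.symm hkj)
          have h1 : Δ < |τ j - τ k| := lt_of_lt_of_le hsep' (min_le_left _ _)
          have h2 : Δ < 1 - |τ j - τ k| := lt_of_lt_of_le hsep' (min_le_right _ _)
          have h3 : |τ j - τ k| < 1 := by linarith
          rw [cross _ h3 h1 h2, mul_zero]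
        · intro h
          exact absurd (Finset.mem_univ j) h
    _ = F 0 * ((∑ j, ‖c j‖ ^ 2 : ℝ) : ℂ) := by
        rw [← Finset.sum_mul, mul_comm]
        congr 1
        push_cast
        refine Finset.sum_congr rfl fun j _ => ?_
        rw [Complex.mul_conj, Complex.normSq_eq_norm_sq]
        norm_cast
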